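/- arXiv:1502.06226 — 2 statements merged into one kernel-verified Lean document; each statement's English description precedes it below -/
import Mathlib

section
/- For all objects i, j of C and all integers n > 2, the degree-n component C(i,j)_n of the morphism space C(i,j) is zero. -/
open SimpleGraph

/-- A simple graph equipped with an orientation (a choice of one direction for each
edge) which contains an infinite directed walk. -/
structure OrientedWithRay {V : Type} (G : SimpleGraph V) where
  dir : V → V → Prop
  dir_adj : ∀ {i j : V}, dir i j → G.Adj i j
  total : ∀ {i j : V}, G.Adj i j → dir i j ∨ dir j i
  asymm : ∀ {i j : V}, dir i j → ¬ dir j i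
  ray : ℕ → V
  ray_dir : ∀ n : ℕ, dir (ray n) (ray (n + 1))

variable (k : Type) [Field k] {V : Type} (G : SimpleGraph V)

/-- The morphism space of the free `k`-linear category on the path category of the
doubled quiver `Q` of `G`: paths in `Q` from `i` to `j` are exactly walks in `G`. -/
abbrev PathAlg (i j : V) : Type := G.Walk i j →₀ k

/-- Bilinear composition (concatenation of paths, written diagrammatically). -/
noncomputable def pmul {i j l : V} (x : PathAlg k G i j) (y : PathAlg k G j l) :
    PathAlg k G i l :=
  x.sum fun p a => y.sum fun q b => Finsupp.single (p.append q) (a * b)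

/-- The generating relations: (i) `a ∘ b = 0` for arrows `b : i → j`, `a : j → l` with
`i`, `j`, `l` pairwise distinct; (ii) `a₁ ∘ b₁ = a₂ ∘ b₂` for the two length-2 loops at
`j` through distinct neighbours `a ≠ b`. -/
inductive IsRelGen : ∀ {i j : V}, PathAlg k G i j → Prop
  | rel1 {i j l : V} (h1 : G.Adj i j) (h2 : G.Adj j l) (hij : i ≠ j) (hjl : j ≠ l)
      (hil : i ≠ l) :
      IsRelGen (Finsupp.single (Walk.cons h1 (Walk.cons h2 Walk.nil)) (1 : k))
  | rel2 {j a b : V} (h1 : G.Adj j a) (h2 : G.Adj j b) (hja : j ≠ a) (hjb : j ≠ b)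
      (hab : a ≠ b) :
      IsRelGen (Finsupp.single (Walk.cons h1 (Walk.cons h1.symm Walk.nil)) (1 : k)
        - Finsupp.single (Walk.cons h2 (Walk.cons h2.symm Walk.nil)) (1 : k))

/-- The ideal generated by the relations. -/
noncomputable def CIdeal (i l : V) : Submodule k (PathAlg k G i l) :=
  Submodule.span k
    { z | ∃ (a b : V) (p : G.Walk i a) (r : PathAlg k G a b) (q : G.Walk b l),
        IsRelGen k G r ∧
        z = pmul k G (Finsupp.single p 1) (pmul k G r (Finsupp.single q 1)) }

/-- Morphism spaces of the category `C`. -/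
abbrev CHom (i l : V) := PathAlg k G i l ⧸ CIdeal k G i l

/-- The image in `C` of a path of `Q`. -/
noncomputable def cmk {i l : V} (p : G.Walk i l) : CHom k G i l :=
  Submodule.Quotient.mk (Finsupp.single p 1)

/-- The degree-`n` component `C(i,l)_n`, spanned by (images of) the paths of length `n`. -/
noncomputable def CGradeZ (i l : V) (n : ℤ) : Submodule k (CHom k G i l) :=
  Submodule.span k { x | ∃ p : G.Walk i l, (p.length : ℤ) = n ∧ x = cmk k G p }

/-!
A path of length at least three starts either with a path `i → x → y` through three distinct
vertices, which vanishes by relation (i), or with `i → x → y → z` where again `x, y, z` are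
distinct, or it is a zigzag `i → x → i → x`. In the zigzag case a third neighbour `w` of `x`
turns `x → i → x` into `x → w → x` by relation (ii), and then `i → x → w` vanishes; a third
neighbour of `i` works symmetrically. Such a neighbour exists because the graph is connected
and the infinite directed walk visits three distinct vertices.
-/

section

variable {G}

lemma SimpleGraph.Walk.mem_of_adj_closed {S : Set V} (hS : ∀ u v, u ∈ S → G.Adj u v → v ∈ S)
    {u v : V} (p : G.Walk u v) (hu : u ∈ S) : v ∈ S := by
  induction p with
  | nil => exact hu
  | cons h _ ih => exact ih (hS _ _ hu h)

lemma OrientedWithRay.exists_ne_ne (O : OrientedWithRay G) (i x : V) : ∃ v, v ≠ i ∧ v ≠ x := by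
  have h01 : O.ray 0 ≠ O.ray 1 := (O.dir_adj (O.ray_dir 0)).ne
  have h12 : O.ray 1 ≠ O.ray 2 := (O.dir_adj (O.ray_dir 1)).ne
  have h02 : O.ray 0 ≠ O.ray 2 := fun h => O.asymm (O.ray_dir 0) (h ▸ O.ray_dir 1)
  by_contra! h
  have hv (v : V) : v = i ∨ v = x := or_iff_not_imp_left.2 (h v)
  rcases hv (O.ray 0) with h0 | h0 <;> rcases hv (O.ray 1) with h1 | h1 <;>
    rcases hv (O.ray 2) with h2 | h2 <;> simp_all

lemma OrientedWithRay.exists_third_neighbor (hconn : G.Connected) (O : OrientedWithRay G)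
    (i x : V) : ∃ w, G.Adj x w ∧ w ≠ i ∨ G.Adj i w ∧ w ≠ x := by
  by_contra! h
  have hclosed : ∀ u v, u ∈ ({i, x} : Set V) → G.Adj u v → v ∈ ({i, x} : Set V) := by
    rintro u v (rfl | rfl) huv
    · exact .inr ((h v).2 huv)
    · exact .inl ((h v).1 huv)
  obtain ⟨v, hvi, hvx⟩ := O.exists_ne_ne i x
  obtain ⟨p⟩ := hconn.preconnected i v
  rcases p.mem_of_adj_closed hclosed (.inl rfl) with hv | hv
  exacts [hvi hv, hvx hv]

end

lemma pmul_single_single {i j l : V} (p : G.Walk i j) (q : G.Walk j l) (a b : k) :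
    pmul k G (Finsupp.single p a) (Finsupp.single q b)
      = Finsupp.single (p.append q) (a * b) := by
  simp [pmul, Finsupp.sum_single_index]

lemma pmul_sub_single {i j l : V} (x y : PathAlg k G i j) (q : G.Walk j l) (c : k) :
    pmul k G (x - y) (Finsupp.single q c)
      = pmul k G x (Finsupp.single q c) - pmul k G y (Finsupp.single q c) :=
  Finsupp.sum_sub_index fun _ _ _ => by simp [sub_mul, Finsupp.single_sub]

lemma pmul_single_sub {i j l : V} (p : G.Walk i j) (c : k) (x y : PathAlg k G j l) :
    pmul k G (Finsupp.single p c) (x - y)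
      = pmul k G (Finsupp.single p c) x - pmul k G (Finsupp.single p c) y := by
  unfold pmul
  rw [Finsupp.sum_single_index, Finsupp.sum_single_index, Finsupp.sum_single_index]
  · exact Finsupp.sum_sub_index fun _ _ _ => by simp [mul_sub, Finsupp.single_sub]
  all_goals simp

lemma single_append_rel1_mem_CIdeal {i l a b c : V} (p : G.Walk i a) (h1 : G.Adj a b)
    (h2 : G.Adj b c) (q : G.Walk c l) (hac : a ≠ c) :
    Finsupp.single (p.append (.cons h1 (.cons h2 q))) (1 : k) ∈ CIdeal k G i l := by
  apply Submodule.subset_span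
  refine ⟨a, c, p, _, q, IsRelGen.rel1 h1 h2 h1.ne h2.ne hac, ?_⟩
  simp [pmul_single_single]

lemma single_append_rel2_sub_mem_CIdeal {i l j a b : V} (p : G.Walk i j) (h1 : G.Adj j a)
    (h2 : G.Adj j b) (q : G.Walk j l) (hab : a ≠ b) :
    Finsupp.single (p.append (.cons h1 (.cons h1.symm q))) (1 : k)
      - Finsupp.single (p.append (.cons h2 (.cons h2.symm q))) (1 : k) ∈ CIdeal k G i l := by
  apply Submodule.subset_span
  refine ⟨j, j, p, _, q, IsRelGen.rel2 h1 h2 h1.ne h2.ne hab, ?_⟩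
  simp [pmul_sub_single, pmul_single_sub, pmul_single_single]

lemma single_zigzag_mem_CIdeal (hconn : G.Connected) (O : OrientedWithRay G) {i x l : V}
    (h : G.Adj i x) (q : G.Walk x l) :
    Finsupp.single (.cons h (.cons h.symm (.cons h q))) (1 : k) ∈ CIdeal k G i l := by
  obtain ⟨w, ⟨hxw, hwi⟩ | ⟨hiw, hwx⟩⟩ := O.exists_third_neighbor hconn i x
  · -- `i x i x q = (i x i x q - i x w x q) + i x w x q`
    have hswap := single_append_rel2_sub_mem_CIdeal k G (.cons h .nil) h.symm hxw q hwi.symm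
    have hzero := single_append_rel1_mem_CIdeal k G .nil h hxw (.cons hxw.symm q) hwi.symm
    simpa using (CIdeal k G i l).add_mem hswap hzero
  · -- `i x i x q = (i x i x q - i w i x q) + i w i x q`
    have hswap := single_append_rel2_sub_mem_CIdeal k G .nil h hiw (.cons h q) hwx.symm
    have hzero := single_append_rel1_mem_CIdeal k G (.cons hiw .nil) hiw.symm h q hwx
    simpa using (CIdeal k G i l).add_mem hswap hzero

lemma single_mem_CIdeal_of_three_le_length (hconn : G.Connected) (O : OrientedWithRay G)
    {i l : V} (p : G.Walk i l) (hp : 3 ≤ p.length) : Finsupp.single p (1 : k) ∈ CIdeal k G i l := by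
  match p, hp with
  | .cons (v := x) h1 (.cons (v := y) h2 (.cons (v := z) h3 q)), _ =>
    by_cases hiy : i = y
    · subst hiy
      by_cases hxz : x = z
      · subst hxz
        exact single_zigzag_mem_CIdeal k G hconn O h1 q
      · simpa using single_append_rel1_mem_CIdeal k G (.cons h1 .nil) h2 h3 q hxz
    · simpa using single_append_rel1_mem_CIdeal k G .nil h1 h2 (.cons h3 q) hiy

theorem statement_1_general (k : Type) [Field k] {V : Type} (G : SimpleGraph V)
    (hconn : G.Connected) (O : OrientedWithRay G) :
    ∀ (i j : V) (n : ℤ), 2 < n → CGradeZ k G i j n = ⊥ := by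
  intro i j n hn
  rw [eq_bot_iff, CGradeZ, Submodule.span_le]
  rintro x ⟨p, hlen, rfl⟩
  simp only [SetLike.mem_coe, Submodule.mem_bot, cmk, Submodule.Quotient.mk_eq_zero]
  exact single_mem_CIdeal_of_three_le_length k G hconn O p (by omega)

/-- STATEMENT 1: For all objects `i, j` of `C` and all integers `n > 2`, the degree-`n`
component `C(i,j)_n` is zero. -/
theorem statement_1 (k : Type) [Field k] [IsAlgClosed k] {V : Type} (G : SimpleGraph V)
    (hconn : G.Connected) (O : OrientedWithRay G) :
    ∀ (i j : V) (n : ℤ), 2 < n → CGradeZ k G i j n = ⊥ :=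
  statement_1_general k G hconn O
end

section
/- For all distinct vertices i ≠ j of G, the degree-2 component C(i,j)_2 is zero. Moreover, for every vertex i of G, all degree-2 loops a∘b at i (where b : i → j and a : j → i are opposite arrows of Q for some neighbour j of i) are equal and nonzero in C, so C(i,i)_2 is one-dimensional over k. -/
open SimpleGraph

variable (k : Type) [Field k] {V : Type} (G : SimpleGraph V)

lemma pmul_sub_left {i j l : V} (x y : PathAlg k G i j) (z : PathAlg k G j l) :
    pmul k G (x - y) z = pmul k G x z - pmul k G y z := by
  unfold pmul
  refine Finsupp.sum_sub_index fun p a₁ a₂ => ?_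
  rw [← Finsupp.sum_sub]
  simp only [sub_mul, Finsupp.single_sub]

lemma pmul_sub_right {i j l : V} (x : PathAlg k G i j) (y z : PathAlg k G j l) :
    pmul k G x (y - z) = pmul k G x y - pmul k G x z := by
  unfold pmul
  rw [← Finsupp.sum_sub]
  congr 1
  funext p a
  refine Finsupp.sum_sub_index fun q b₁ b₂ => ?_
  rw [mul_sub, Finsupp.single_sub]

lemma single_nil_pmul {i l : V} (x : PathAlg k G i l) :
    pmul k G (Finsupp.single Walk.nil 1) x = x := by
  unfold pmul
  rw [Finsupp.sum_single_index] <;> simp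

lemma pmul_single_nil {i l : V} (x : PathAlg k G i l) :
    pmul k G x (Finsupp.single Walk.nil 1) = x := by
  unfold pmul
  conv_rhs => rw [← Finsupp.sum_single x]
  refine Finsupp.sum_congr fun p _ => ?_
  rw [Finsupp.sum_single_index (by simp), Walk.append_nil, mul_one]

lemma mem_CIdeal_of_isRelGen {i l : V} {r : PathAlg k G i l} (hr : IsRelGen k G r) :
    r ∈ CIdeal k G i l :=
  Submodule.subset_span ⟨i, l, Walk.nil, r, Walk.nil, hr, by
    rw [pmul_single_nil, single_nil_pmul]⟩

variable {G} in
lemma SimpleGraph.Walk.exists_eq_cons_cons_nil_of_length_eq_two {i l : V} (p : G.Walk i l)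
    (hp : p.length = 2) :
    ∃ (j : V) (h1 : G.Adj i j) (h2 : G.Adj j l), p = Walk.cons h1 (Walk.cons h2 Walk.nil) := by
  match p, hp with
  | .cons h1 (.cons h2 .nil), _ => exact ⟨_, h1, h2, rfl⟩

lemma cmk_cons_cons_nil_eq_zero {i j l : V} (h1 : G.Adj i j) (h2 : G.Adj j l) (hil : i ≠ l) :
    cmk k G (Walk.cons h1 (Walk.cons h2 Walk.nil)) = 0 :=
  (Submodule.Quotient.mk_eq_zero _).2 <|
    mem_CIdeal_of_isRelGen k G (IsRelGen.rel1 h1 h2 h1.ne h2.ne hil)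

lemma cmk_loop_eq {i j l : V} (h1 : G.Adj i j) (h2 : G.Adj i l) :
    cmk k G (Walk.cons h1 (Walk.cons h1.symm Walk.nil)) =
      cmk k G (Walk.cons h2 (Walk.cons h2.symm Walk.nil)) := by
  obtain rfl | hjl := eq_or_ne j l
  · rfl
  · exact (Submodule.Quotient.eq _).2 <|
      mem_CIdeal_of_isRelGen k G (IsRelGen.rel2 h1 h2 h1.ne h2.ne hjl)

noncomputable def lengthTwoCoeffSum (i l : V) : PathAlg k G i l →ₗ[k] k :=
  Finsupp.lsum k fun p : G.Walk i l => if p.length = 2 then LinearMap.id else 0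

lemma lengthTwoCoeffSum_single {i l : V} (p : G.Walk i l) (c : k) :
    lengthTwoCoeffSum k G i l (Finsupp.single p c) = if p.length = 2 then c else 0 := by
  rw [lengthTwoCoeffSum, Finsupp.lsum_single]
  split <;> simp

lemma CIdeal_le_ker_lengthTwoCoeffSum (i : V) :
    CIdeal k G i i ≤ LinearMap.ker (lengthTwoCoeffSum k G i i) := by
  rw [CIdeal, Submodule.span_le]
  rintro z ⟨a, b, p, r, q, hr, rfl⟩
  simp only [SetLike.mem_coe, LinearMap.mem_ker]
  cases hr with
  | rel1 h1 h2 _ _ hil =>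
    rw [pmul_single_single, pmul_single_single, lengthTwoCoeffSum_single, if_neg]
    intro hlen
    simp only [Walk.length_append, Walk.length_cons, Walk.length_nil] at hlen
    obtain rfl := Walk.eq_of_length_eq_zero (p := p) (by omega)
    obtain rfl := Walk.eq_of_length_eq_zero (p := q) (by omega)
    exact hil rfl
  | rel2 h1 h2 _ _ _ =>
    rw [pmul_sub_left, pmul_sub_right, pmul_single_single, pmul_single_single,
      pmul_single_single, pmul_single_single, map_sub, lengthTwoCoeffSum_single,
      lengthTwoCoeffSum_single]
    simp

lemma cmk_loop_ne_zero {i j : V} (h : G.Adj i j) :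
    cmk k G (Walk.cons h (Walk.cons h.symm Walk.nil)) ≠ 0 := by
  intro h0
  have := CIdeal_le_ker_lengthTwoCoeffSum k G i ((Submodule.Quotient.mk_eq_zero _).1 h0)
  simp [LinearMap.mem_ker, lengthTwoCoeffSum_single] at this

lemma CGradeZ_two_eq_bot {i l : V} (hil : i ≠ l) : CGradeZ k G i l 2 = ⊥ := by
  rw [CGradeZ, Submodule.span_eq_bot]
  rintro x ⟨p, hlen, rfl⟩
  obtain ⟨j, h1, h2, rfl⟩ := p.exists_eq_cons_cons_nil_of_length_eq_two (by omega)
  exact cmk_cons_cons_nil_eq_zero k G h1 h2 hil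

lemma CGradeZ_two_self_eq_span_loop {i j : V} (h : G.Adj i j) :
    CGradeZ k G i i 2 = k ∙ cmk k G (Walk.cons h (Walk.cons h.symm Walk.nil)) := by
  refine le_antisymm (Submodule.span_le.2 ?_) (Submodule.span_mono ?_)
  · rintro x ⟨p, hlen, rfl⟩
    obtain ⟨l, h1, h2, rfl⟩ := p.exists_eq_cons_cons_nil_of_length_eq_two (by omega)
    rw [SetLike.mem_coe, cmk_loop_eq k G h1 h]
    exact Submodule.mem_span_singleton_self _
  · rintro x rfl
    exact ⟨_, by simp, rfl⟩

theorem statement_3_general (k : Type) [Field k] {V : Type} (G : SimpleGraph V)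
    (hconn : G.Connected) (O : OrientedWithRay G) :
    (∀ i j : V, i ≠ j → CGradeZ k G i j 2 = ⊥) ∧
    (∀ (i j l : V) (h1 : G.Adj i j) (h2 : G.Adj i l),
      cmk k G (Walk.cons h1 (Walk.cons h1.symm Walk.nil)) =
        cmk k G (Walk.cons h2 (Walk.cons h2.symm Walk.nil)) ∧
      cmk k G (Walk.cons h1 (Walk.cons h1.symm Walk.nil)) ≠ 0) ∧
    (∀ i : V, Module.finrank k ↥(CGradeZ k G i i 2) = 1) := by
  refine ⟨fun i j hij => CGradeZ_two_eq_bot k G hij,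
    fun i j l h1 h2 => ⟨cmk_loop_eq k G h1 h2, cmk_loop_ne_zero k G h1⟩, fun i => ?_⟩
  have : Nontrivial V := nontrivial_of_ne _ _ (O.dir_adj (O.ray_dir 0)).ne
  obtain ⟨j, hj⟩ := hconn.preconnected.exists_adj_of_nontrivial i
  rw [CGradeZ_two_self_eq_span_loop k G hj]
  exact finrank_span_singleton (cmk_loop_ne_zero k G hj)

/-- STATEMENT 3: For distinct `i ≠ j`, `C(i,j)_2 = 0`; all degree-2 loops at a vertex
`i` are equal and nonzero in `C`, and `C(i,i)_2` is one-dimensional. -/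
theorem statement_3 (k : Type) [Field k] [IsAlgClosed k] {V : Type} (G : SimpleGraph V)
    (hconn : G.Connected) (O : OrientedWithRay G) :
    (∀ i j : V, i ≠ j → CGradeZ k G i j 2 = ⊥) ∧
    (∀ (i j l : V) (h1 : G.Adj i j) (h2 : G.Adj i l),
      cmk k G (Walk.cons h1 (Walk.cons h1.symm Walk.nil)) =
        cmk k G (Walk.cons h2 (Walk.cons h2.symm Walk.nil)) ∧
      cmk k G (Walk.cons h1 (Walk.cons h1.symm Walk.nil)) ≠ 0) ∧
    (∀ i : V, Module.finrank k ↥(CGradeZ k G i i 2) = 1) :=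
  statement_3_general k G hconn O
end
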